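/- For all x ≥ 0, ψ_1(x) = inf over β ∈ (0,1] of ψ_β(x); equivalently, for every β ∈ (0,1] and x ≥ 0, ψ_1(x) ≤ ψ_β(x). -/

import Mathlib

/-!
Write `ψ_β(x) = (1 - x / φ_β(x)) / (1 - x)`. The base `(1 + x) / (1 + (1 + β) x)` of `φ_β(x)`
decreases in `β`, while the exponent `1/x - 1` has the sign of `1 - x`; hence `φ_β(x) - φ_1(x)`
has the sign of `1 - x` for `β ≤ 1`, and so does `ψ_β(x) - ψ_1(x)` after dividing by `1 - x`.
The inequality then extends from `(0, ∞) \ {1}` to its closure `[0, ∞)` by continuity.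
-/

noncomputable def phi (β x : ℝ) : ℝ := ((1 + x) / (1 + (1 + β) * x)) ^ (1 / x - 1)

noncomputable def psi (β x : ℝ) : ℝ := (phi β x - x) / ((1 - x) * phi β x)

open Set

section PhiPsi

variable {β γ x : ℝ}

lemma phi_base_pos (hβ : -1 ≤ β) (hx : 0 < x) : 0 < (1 + x) / (1 + (1 + β) * x) :=
  div_pos (by linarith) (by nlinarith)

lemma phi_pos (hβ : -1 ≤ β) (hx : 0 < x) : 0 < phi β x :=
  Real.rpow_pos_of_pos (phi_base_pos hβ hx) _

lemma phi_base_anti (hβ : -1 ≤ β) (hβγ : β ≤ γ) (hx : 0 < x) :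
    (1 + x) / (1 + (1 + γ) * x) ≤ (1 + x) / (1 + (1 + β) * x) :=
  div_le_div_of_nonneg_left (by linarith) (by nlinarith) (by nlinarith)

lemma phi_le_phi_of_le_of_le_one (hβ : -1 ≤ β) (hβγ : β ≤ γ) (hx : 0 < x) (hx1 : x ≤ 1) :
    phi γ x ≤ phi β x :=
  Real.rpow_le_rpow (phi_base_pos (hβ.trans hβγ) hx).le (phi_base_anti hβ hβγ hx)
    (by rw [sub_nonneg, le_div_iff₀ hx]; linarith)

lemma phi_le_phi_of_le_of_one_le (hβ : -1 ≤ β) (hβγ : β ≤ γ) (hx : 0 < x) (hx1 : 1 ≤ x) :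
    phi β x ≤ phi γ x :=
  Real.rpow_le_rpow_of_nonpos (phi_base_pos (hβ.trans hβγ) hx) (phi_base_anti hβ hβγ hx)
    (by rw [sub_nonpos, div_le_one hx]; exact hx1)

lemma div_one_sub_nonneg_phi_sub_phi (hβ : -1 ≤ β) (hβγ : β ≤ γ) (hx : 0 < x) :
    0 ≤ (phi β x - phi γ x) / (1 - x) := by
  rcases le_total x 1 with hx1 | hx1
  · exact div_nonneg (sub_nonneg.2 (phi_le_phi_of_le_of_le_one hβ hβγ hx hx1)) (by linarith)
  · exact div_nonneg_of_nonpos (sub_nonpos.2 (phi_le_phi_of_le_of_one_le hβ hβγ hx hx1))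
      (by linarith)

lemma psi_sub_psi (hφβ : phi β x ≠ 0) (hφγ : phi γ x ≠ 0) :
    psi β x - psi γ x = x * ((phi β x - phi γ x) / (1 - x)) / (phi β x * phi γ x) := by
  rw [psi, psi]
  rcases eq_or_ne (1 - x) 0 with hx | hx
  · simp [hx]
  · field_simp
    ring

lemma psi_anti (hβ : -1 ≤ β) (hβγ : β ≤ γ) (hx : 0 < x) : psi γ x ≤ psi β x := by
  have hφβ := phi_pos hβ hx
  have hφγ := phi_pos (hβ.trans hβγ) hx
  have := div_one_sub_nonneg_phi_sub_phi hβ hβγ hx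
  rw [← sub_nonneg, psi_sub_psi hφβ.ne' hφγ.ne']
  positivity

end PhiPsi

lemma closure_Ioi_diff_singleton (a b : ℝ) : closure (Ioi a \ {b}) = Ici a := by
  refine subset_antisymm ((closure_mono sdiff_subset).trans_eq (closure_Ioi a)) ?_
  rw [← closure_Ioi a, sdiff_eq]
  exact closure_minimal ((dense_compl_singleton b).open_subset_closure_inter isOpen_Ioi)
    isClosed_closure

theorem psi_one_is_inf (β : ℝ) (hβ : β ∈ Set.Ioc (0 : ℝ) 1) (g₁ gβ : ℝ → ℝ)
    (hg₁_cont : ContinuousOn g₁ (Set.Ici (0 : ℝ)))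
    (hg₁_eq : ∀ x : ℝ, 0 < x → x ≠ 1 → g₁ x = psi 1 x)
    (hgβ_cont : ContinuousOn gβ (Set.Ici (0 : ℝ)))
    (hgβ_eq : ∀ x : ℝ, 0 < x → x ≠ 1 → gβ x = psi β x) :
    ∀ x : ℝ, 0 ≤ x → g₁ x ≤ gβ x := by
  have hle : ∀ x ∈ Ioi 0 \ {1}, g₁ x ≤ gβ x := fun x ⟨hx0, hx1⟩ => by
    rw [hg₁_eq x hx0 hx1, hgβ_eq x hx0 hx1]
    exact psi_anti (by linarith [hβ.1]) hβ.2 hx0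
  rw [← closure_Ioi_diff_singleton 0 1] at hg₁_cont hgβ_cont
  intro x hx
  exact le_on_closure hle hg₁_cont hgβ_cont (by rwa [closure_Ioi_diff_singleton])
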